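/- arXiv:math/0303362 — 2 statements merged into one kernel-verified Lean document; each statement's English description precedes it below -/
import Mathlib

section
/- For all integers m, n, p with m + n + p = 0, the identity [m−n]⟨p⟩γ_p + [n−p]⟨m⟩γ_m + [p−m]⟨n⟩γ_n = 0 holds. -/
/-- The q-integer `[m] = (q^m - q^(-m))/(q - q⁻¹)`, for real `q`. -/
noncomputable def qInt (q : ℝ) (m : ℤ) : ℝ := (q ^ m - q ^ (-m)) / (q - q⁻¹)

/-- `⟨m⟩ = q^m + q^(-m)`, for real `q`. -/
noncomputable def qBra (q : ℝ) (m : ℤ) : ℝ := q ^ m + q ^ (-m)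

/-- `γ_m = [m+1][m][m−1]/([2][3]⟨m⟩)`. -/
noncomputable def qGamma (q : ℝ) (m : ℤ) : ℝ :=
  qInt q (m + 1) * qInt q m * qInt q (m - 1) / (qInt q 2 * qInt q 3 * qBra q m)

/-!
Since `⟨p⟩ ≠ 0`, the term `⟨p⟩γ_p` is `[p+1][p][p-1] / ([2][3])`, and with `d = q - q⁻¹` one has
`d² [p+1][p][p-1] = [3p] - [3][p]`. So it suffices that both `Σ_cyc [m-n][p]` and
`Σ_cyc [m-n][3p]` vanish when `m + n + p = 0`. By the product-to-sum formula
`d² [a][b] = ⟨a+b⟩ - ⟨a-b⟩` and `⟨-a⟩ = ⟨a⟩`, each of these cyclic sums telescopes.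
-/

section

variable {q : ℝ}

lemma ne_zero_of_sub_inv_ne_zero (hd : q - q⁻¹ ≠ 0) : q ≠ 0 := by
  rintro rfl; simp at hd

lemma sq_sub_one_ne_zero_of_sub_inv_ne_zero (hd : q - q⁻¹ ≠ 0) : q ^ 2 - 1 ≠ 0 := by
  have hq := ne_zero_of_sub_inv_ne_zero hd
  rw [show q ^ 2 - 1 = q * (q - q⁻¹) by field_simp]
  exact mul_ne_zero hq hd

lemma sq_sub_inv_mul_qInt_mul_qInt (hd : q - q⁻¹ ≠ 0) (a b : ℤ) :
    (q - q⁻¹) ^ 2 * (qInt q a * qInt q b) = qBra q (a + b) - qBra q (a - b) := by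
  have hq := ne_zero_of_sub_inv_ne_zero hd
  have := sq_sub_one_ne_zero_of_sub_inv_ne_zero hd
  simp only [qInt, qBra, neg_add, neg_sub, zpow_add₀ hq, zpow_sub₀ hq, zpow_neg]
  field_simp
  ring

lemma qInt_succ_mul_qInt_mul_qInt_pred (hd : q - q⁻¹ ≠ 0) (m : ℤ) :
    qInt q (m + 1) * qInt q m * qInt q (m - 1)
      = (qInt q (3 * m) - qInt q 3 * qInt q m) / (q - q⁻¹) ^ 2 := by
  have hq := ne_zero_of_sub_inv_ne_zero hd
  have := sq_sub_one_ne_zero_of_sub_inv_ne_zero hd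
  simp only [qInt, mul_comm (3 : ℤ) m, zpow_mul, ← neg_mul, zpow_add₀ hq, zpow_sub₀ hq, zpow_neg,
    zpow_ofNat]
  field_simp
  ring

lemma qBra_neg (m : ℤ) : qBra q (-m) = qBra q m := by
  rw [qBra, qBra, neg_neg, add_comm]

lemma qBra_ne_zero (hq : q ≠ 0) (m : ℤ) : qBra q m ≠ 0 := by
  have ht : q ^ m ≠ 0 := zpow_ne_zero m hq
  have key : qBra q m * q ^ m = (q ^ m) ^ 2 + 1 := by
    rw [qBra, zpow_neg]; field_simp
  intro h0
  rw [h0, zero_mul] at key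
  nlinarith [sq_nonneg (q ^ m)]

lemma qBra_mul_qGamma (hq : q ≠ 0) (m : ℤ) :
    qBra q m * qGamma q m = qInt q (m + 1) * qInt q m * qInt q (m - 1) / (qInt q 2 * qInt q 3) := by
  have := qBra_ne_zero hq m
  rw [qGamma]; field_simp

variable {m n p : ℤ}

lemma qInt_cyclic_sum_eq_zero (hd : q - q⁻¹ ≠ 0) (h : m + n + p = 0) :
    qInt q (m - n) * qInt q p + qInt q (n - p) * qInt q m + qInt q (p - m) * qInt q n = 0 := by
  refine (mul_right_injective₀ (pow_ne_zero 2 hd)) ?_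
  simp only [mul_add, sq_sub_inv_mul_qInt_mul_qInt hd, mul_zero]
  rw [show m - n + p = -(2 * n) by omega, show n - p + m = -(2 * p) by omega,
    show p - m + n = -(2 * m) by omega, show m - n - p = 2 * m by omega,
    show n - p - m = 2 * n by omega, show p - m - n = 2 * p by omega]
  simp only [qBra_neg]
  ring

lemma qInt_three_mul_cyclic_sum_eq_zero (hd : q - q⁻¹ ≠ 0) (h : m + n + p = 0) :
    qInt q (m - n) * qInt q (3 * p) + qInt q (n - p) * qInt q (3 * m)
      + qInt q (p - m) * qInt q (3 * n) = 0 := by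
  refine (mul_right_injective₀ (pow_ne_zero 2 hd)) ?_
  simp only [mul_add, sq_sub_inv_mul_qInt_mul_qInt hd, mul_zero]
  rw [show m - n + 3 * p = -(2 * m + 4 * n) by omega, show n - p + 3 * m = 4 * m + 2 * n by omega,
    show p - m + 3 * n = 2 * n - 2 * m by omega, show m - n - 3 * p = 4 * m + 2 * n by omega,
    show n - p - 3 * m = 2 * n - 2 * m by omega, show p - m - 3 * n = -(2 * m + 4 * n) by omega]
  simp only [qBra_neg]
  ring

end

theorem qGamma_cyclic_identity_general (q : ℝ)
    (m n p : ℤ) (h : m + n + p = 0) :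
    qInt q (m - n) * qBra q p * qGamma q p
      + qInt q (n - p) * qBra q m * qGamma q m
      + qInt q (p - m) * qBra q n * qGamma q n = 0 := by
  by_cases hd : q - q⁻¹ = 0
  · -- every `qInt q k` is a division by zero
    simp [qInt, hd]
  have hq := ne_zero_of_sub_inv_ne_zero hd
  simp only [mul_assoc _ (qBra q _), qBra_mul_qGamma hq, qInt_succ_mul_qInt_mul_qInt_pred hd]
  linear_combination (qInt_three_mul_cyclic_sum_eq_zero hd h - qInt q 3 * qInt_cyclic_sum_eq_zero hd h)
    / (q - q⁻¹) ^ 2 / (qInt q 2 * qInt q 3)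

/-- For all integers `m, n, p` with `m + n + p = 0`:
`[m−n]⟨p⟩γ_p + [n−p]⟨m⟩γ_m + [p−m]⟨n⟩γ_n = 0`. -/
theorem qGamma_cyclic_identity (q : ℝ) (hq : 0 < q) (hq1 : q ≠ 1)
    (m n p : ℤ) (h : m + n + p = 0) :
    qInt q (m - n) * qBra q p * qGamma q p
      + qInt q (n - p) * qBra q m * qGamma q m
      + qInt q (p - m) * qBra q n * qGamma q n = 0 :=
  qGamma_cyclic_identity_general q m n p h
end

section
/- For all Laurent polynomials v and w over ℝ, writing v = Σ_k v_k z^k and w = Σ_k w_k z^k, one has res(w · ∂_q² S ∂_q v) = Σ_{n∈ℤ} v_{n+1}·w_{1−n}·[n+1][n][n−1]/⟨n⟩ (a finite sum). Equivalently, dividing by [2][3], the bilinear form φ(v∂_q, w∂_q) := (1/([2][3]))·res(w · ∂_q² S ∂_q v) equals Σ_{n∈ℤ} v_{n+1}·w_{1−n}·γ_n. -/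
/-- The q-derivative `∂_q` on `ℝ[z,z⁻¹]`: `∂_q z^k = [k]·z^{k−1}`. -/
noncomputable def dq (q : ℝ) : LaurentPolynomial ℝ →ₗ[ℝ] LaurentPolynomial ℝ :=
  (AddMonoidAlgebra.coeffLinearEquiv ℝ (S := ℝ) (M := ℤ)).symm.toLinearMap ∘ₗ
    (Finsupp.lsum ℝ fun k => qInt q k • Finsupp.lsingle (k - 1)) ∘ₗ
    (AddMonoidAlgebra.coeffLinearEquiv ℝ (S := ℝ) (M := ℤ)).toLinearMap

/-- The operator `S = (τ + τ⁻¹)⁻¹` on `ℝ[z,z⁻¹]`: `S z^k = z^k/⟨k⟩`. -/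
noncomputable def S (q : ℝ) : LaurentPolynomial ℝ →ₗ[ℝ] LaurentPolynomial ℝ :=
  (AddMonoidAlgebra.coeffLinearEquiv ℝ (S := ℝ) (M := ℤ)).symm.toLinearMap ∘ₗ
    (Finsupp.lsum ℝ fun k => (qBra q k)⁻¹ • Finsupp.lsingle k) ∘ₗ
    (AddMonoidAlgebra.coeffLinearEquiv ℝ (S := ℝ) (M := ℤ)).toLinearMap

/-- `res(f)` is the coefficient of `z^{−1}` in `f`. -/
noncomputable def res (f : LaurentPolynomial ℝ) : ℝ := f.coeff (-1)

theorem Finsupp.lsum_smul_lsingle_apply {R M : Type*} [CommSemiring R] (e : M ≃ M) (c : M → R)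
    (f : M →₀ R) (j : M) :
    (Finsupp.lsum R fun k => c k • Finsupp.lsingle (e k) : (M →₀ R) →ₗ[R] M →₀ R) f j
      = c (e.symm j) * f (e.symm j) := by
  classical
  induction f using Finsupp.induction_linear with
  | zero => simp
  | add f g hf hg => simp only [map_add, Finsupp.add_apply, hf, hg, mul_add]
  | single a x =>
    simp only [Finsupp.lsum_single, LinearMap.smul_apply, Finsupp.lsingle_apply,
      Finsupp.smul_apply, Finsupp.single_apply, e.eq_symm_apply, smul_eq_mul]
    split_ifs with h
    · rw [← h, e.symm_apply_apply]
    · rw [mul_zero, mul_zero]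

theorem LaurentPolynomial.coeff_mul_eq_finsum {R : Type*} [CommSemiring R]
    (w u : LaurentPolynomial R) (m : ℤ) : (w * u).coeff m = ∑ᶠ a, w.coeff a * u.coeff (m - a) := by
  rw [AddMonoidAlgebra.coeff_mul_apply_left, Finsupp.sum,
    finsum_eq_sum_of_support_subset (s := w.coeff.support) _
      ((Function.support_mul_subset_left _ _).trans (Finsupp.fun_support_eq _).subset)]
  simp [neg_add_eq_sub]

theorem coeff_dq (q : ℝ) (f : LaurentPolynomial ℝ) (j : ℤ) :
    (dq q f).coeff j = qInt q (j + 1) * f.coeff (j + 1) :=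
  Finsupp.lsum_smul_lsingle_apply (Equiv.subRight 1) _ _ j

theorem coeff_S (q : ℝ) (f : LaurentPolynomial ℝ) (j : ℤ) :
    (S q f).coeff j = (qBra q j)⁻¹ * f.coeff j :=
  Finsupp.lsum_smul_lsingle_apply (Equiv.refl ℤ) _ _ j

theorem coeff_dq_dq_S_dq (q : ℝ) (v : LaurentPolynomial ℝ) (n : ℤ) :
    (dq q (dq q (S q (dq q v)))).coeff (n - 2)
      = qInt q (n + 1) * qInt q n * qInt q (n - 1) / qBra q n * v.coeff (n + 1) := by
  simp only [coeff_dq, coeff_S, show n - 2 + 1 = n - 1 by ring, sub_add_cancel]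
  ring

theorem res_mul_eq_finsum (f g : LaurentPolynomial ℝ) :
    res (f * g) = ∑ᶠ n : ℤ, f.coeff (1 - n) * g.coeff (n - 2) := by
  rw [res, LaurentPolynomial.coeff_mul_eq_finsum, ← finsum_comp_equiv (Equiv.subLeft 1)]
  refine finsum_congr fun n => ?_
  rw [Equiv.subLeft_apply, show -1 - (1 - n) = n - 2 by ring]

theorem res_cocycle_formula_general (q : ℝ)
    (v w : LaurentPolynomial ℝ) :
    res (w * dq q (dq q (S q (dq q v))))
        = ∑ᶠ n : ℤ, v.coeff (n + 1) * w.coeff (1 - n)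
            * (qInt q (n + 1) * qInt q n * qInt q (n - 1) / qBra q n)
      ∧ (1 / (qInt q 2 * qInt q 3)) * res (w * dq q (dq q (S q (dq q v))))
        = ∑ᶠ n : ℤ, v.coeff (n + 1) * w.coeff (1 - n) * qGamma q n := by
  have hres : res (w * dq q (dq q (S q (dq q v))))
      = ∑ᶠ n : ℤ, v.coeff (n + 1) * w.coeff (1 - n)
          * (qInt q (n + 1) * qInt q n * qInt q (n - 1) / qBra q n) := by
    rw [res_mul_eq_finsum]
    exact finsum_congr fun n => by rw [coeff_dq_dq_S_dq]; ring
  refine ⟨hres, ?_⟩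
  rw [hres, mul_finsum]
  exact finsum_congr fun n => by rw [qGamma]; ring

/-- For Laurent polynomials `v = Σ v_k z^k`, `w = Σ w_k z^k`:
`res(w·∂_q²S∂_q v) = Σ_{n∈ℤ} v_{n+1}·w_{1−n}·[n+1][n][n−1]/⟨n⟩`, and equivalently
`φ(v∂_q, w∂_q) := (1/([2][3]))·res(w·∂_q²S∂_q v) = Σ_{n∈ℤ} v_{n+1}·w_{1−n}·γ_n`. -/
theorem res_cocycle_formula (q : ℝ) (hq : 0 < q) (hq1 : q ≠ 1)
    (v w : LaurentPolynomial ℝ) :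
    res (w * dq q (dq q (S q (dq q v))))
        = ∑ᶠ n : ℤ, v.coeff (n + 1) * w.coeff (1 - n)
            * (qInt q (n + 1) * qInt q n * qInt q (n - 1) / qBra q n)
      ∧ (1 / (qInt q 2 * qInt q 3)) * res (w * dq q (dq q (S q (dq q v))))
        = ∑ᶠ n : ℤ, v.coeff (n + 1) * w.coeff (1 - n) * qGamma q n :=
  res_cocycle_formula_general q v w
end
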